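/- Let X be a symmetric simplicial set that is spiny in degrees below q, let σ, τ : [m] → [k] be surjections with σ(0) = 0 = τ(0) and k ≤ q, and let x ∈ X_k be nondegenerate. If 𝓑_m(x·σ) = 𝓑_m(x·τ), then σ = τ. Moreover (endomorphism lemma), for any symmetric set X, if x ∈ X_k is nondegenerate and x = x·α for some function α : [k] → [k], then α is a bijection. -/

import Mathlib

/-- A symmetric (simplicial) set: a functor `Υᵒᵖ → Set`, where `Υ` has objects
`[n] = {0,…,n}` (encoded as `Fin (n+1)`) and all functions as morphisms.
For `α : [m] → [n]` and `x ∈ X_n`, `act α x` is `x · α ∈ X_m`. -/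
structure SymSet where
  obj : ℕ → Type
  act : ∀ {m n : ℕ}, (Fin (m + 1) → Fin (n + 1)) → obj n → obj m
  act_id : ∀ {n : ℕ} (x : obj n), act id x = x
  act_comp : ∀ {m n k : ℕ} (α : Fin (m + 1) → Fin (n + 1)) (β : Fin (n + 1) → Fin (k + 1))
      (x : obj k), act α (act β x) = act (β ∘ α) x

namespace SymSet

/-- `x_{ij} ∈ X_1`, the action on `x ∈ X_n` of the map `[1] → [n]` with `0 ↦ i`, `1 ↦ j`. -/
def edge (X : SymSet) {n : ℕ} (i j : Fin (n + 1)) (x : X.obj n) : X.obj 1 :=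
  X.act (fun t : Fin 2 => if t = 0 then i else j) x

/-- The domain of an edge, its image under `ι₀ : [0] → [1]`, `0 ↦ 0`. -/
def edgeDom (X : SymSet) (f : X.obj 1) : X.obj 0 :=
  X.act (fun _ : Fin 1 => (0 : Fin 2)) f

/-- The codomain of an edge, its image under `ι₁ : [0] → [1]`, `0 ↦ 1`. -/
def edgeCod (X : SymSet) (f : X.obj 1) : X.obj 0 :=
  X.act (fun _ : Fin 1 => (1 : Fin 2)) f

/-- The identity edge `id_a` on an object `a ∈ X_0`, induced by the unique map `[1] → [0]`. -/
def identityEdge (X : SymSet) (a : X.obj 0) : X.obj 1 :=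
  X.act (fun _ : Fin 2 => (0 : Fin 1)) a

/-- An edge is an identity if it is in the image of `X_0 → X_1`. -/
def IsIdentityEdge (X : SymSet) (f : X.obj 1) : Prop :=
  ∃ a : X.obj 0, f = X.identityEdge a

/-- The tuple of edges `x_{ij}` (for `i < j` an edge `{i,j}` of the spine `T`)
associated to an `n`-simplex `x`. -/
def spineTuple (X : SymSet) {n : ℕ} (T : SimpleGraph (Fin (n + 1))) (x : X.obj n) :
    ∀ i j : Fin (n + 1), i < j → T.Adj i j → X.obj 1 :=
  fun i j _ _ => X.edge i j x

/-- Membership in `lim_T X`: the components have matching endpoints. -/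
def IsSpineLim (X : SymSet) {n : ℕ} (T : SimpleGraph (Fin (n + 1)))
    (e : ∀ i j : Fin (n + 1), i < j → T.Adj i j → X.obj 1) : Prop :=
  ∃ v : Fin (n + 1) → X.obj 0, ∀ (i j : Fin (n + 1)) (hlt : i < j) (h : T.Adj i j),
    X.edgeDom (e i j hlt h) = v i ∧ X.edgeCod (e i j hlt h) = v j

/-- The limit `lim_T X` of the diagram associated to a spine `T`. -/
def SpineLim (X : SymSet) {n : ℕ} (T : SimpleGraph (Fin (n + 1))) : Type :=
  { e : ∀ i j : Fin (n + 1), i < j → T.Adj i j → X.obj 1 // X.IsSpineLim T e }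

lemma spineTuple_isSpineLim (X : SymSet) {n : ℕ} (T : SimpleGraph (Fin (n + 1)))
    (x : X.obj n) : X.IsSpineLim T (X.spineTuple T x) := by
  refine ⟨fun i => X.act (fun _ : Fin 1 => i) x, fun i j hlt h => ⟨?_, ?_⟩⟩
  · show X.act _ (X.act _ x) = _
    rw [X.act_comp]
    show X.act ((fun t : Fin 2 => if t = 0 then i else j) ∘ fun _ : Fin 1 => 0) x
      = X.act (fun _ : Fin 1 => i) x
    congr 1
  · show X.act _ (X.act _ x) = _
    rw [X.act_comp]
    show X.act ((fun t : Fin 2 => if t = 0 then i else j) ∘ fun _ : Fin 1 => 1) x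
      = X.act (fun _ : Fin 1 => j) x
    congr 1

/-- The map `𝓔_T : X_n → lim_T X`. -/
def spineMap (X : SymSet) {n : ℕ} (T : SimpleGraph (Fin (n + 1))) (x : X.obj n) :
    X.SpineLim T :=
  ⟨X.spineTuple T x, X.spineTuple_isSpineLim T x⟩

/-- A symmetric set is *spiny* if `𝓔_T` is injective for every `n ≥ 1` and
every spine `T` of `[n]` (a tree with vertex set `[n]`). -/
def Spiny (X : SymSet) : Prop :=
  ∀ n : ℕ, 1 ≤ n → ∀ T : SimpleGraph (Fin (n + 1)), T.IsTree →
    Function.Injective (X.spineMap T)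

/-- An element `x ∈ X_n` is degenerate if `x = y · σ` for some noninvertible
surjection `σ : [n] → [k]`. -/
def Degenerate (X : SymSet) {n : ℕ} (x : X.obj n) : Prop :=
  ∃ (k : ℕ) (σ : Fin (n + 1) → Fin (k + 1)) (y : X.obj k),
    Function.Surjective σ ∧ ¬ Function.Bijective σ ∧ x = X.act σ y

/-- A symmetric subset (subfunctor) of `X`. -/
structure SymSubset (X : SymSet) where
  carrier : ∀ n : ℕ, Set (X.obj n)
  act_mem : ∀ {m n : ℕ} (α : Fin (m + 1) → Fin (n + 1)) {x : X.obj n},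
    x ∈ carrier n → X.act α x ∈ carrier m

/-- `X` is `n`-skeletal: the smallest symmetric subset of `X` containing all
of its `n`-simplices is all of `X`. -/
def IsSkeletal (X : SymSet) (n : ℕ) : Prop :=
  ∀ Y : SymSubset X, (∀ x : X.obj n, x ∈ Y.carrier n) →
    ∀ (m : ℕ) (x : X.obj m), x ∈ Y.carrier m

/-- `X` has dimension `n`: it is `n`-skeletal but not `k`-skeletal for `k < n`
(for `n ≥ 1` this is equivalent to not being `(n-1)`-skeletal). -/
def HasDim (X : SymSet) (n : ℕ) : Prop :=
  X.IsSkeletal n ∧ ∀ k : ℕ, k < n → ¬ X.IsSkeletal k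

/-- Two objects are related if there is an edge between them (in either direction). -/
def EdgeRel (X : SymSet) (a b : X.obj 0) : Prop :=
  ∃ f : X.obj 1, (X.edgeDom f = a ∧ X.edgeCod f = b) ∨ (X.edgeDom f = b ∧ X.edgeCod f = a)

/-- `X` is connected: it is nonempty and any two objects are joined by a
zig-zag of edges. -/
def Connected (X : SymSet) : Prop :=
  Nonempty (X.obj 0) ∧ ∀ a b : X.obj 0, Relation.ReflTransGen X.EdgeRel a b

/-- `n_a`: the number of nonidentity edges with domain `a`. -/
noncomputable def nEdges (X : SymSet) (a : X.obj 0) : ℕ :=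
  Nat.card { f : X.obj 1 // X.edgeDom f = a ∧ ¬ X.IsIdentityEdge f }

/-- `p(X)`: the maximum of the `n_a` over all objects `a`. -/
noncomputable def pVal (X : SymSet) : ℕ := ⨆ a : X.obj 0, X.nEdges a

/-- A map of symmetric sets (a natural transformation). -/
structure SymMap (X Y : SymSet) where
  app : ∀ n : ℕ, X.obj n → Y.obj n
  naturality : ∀ {m n : ℕ} (α : Fin (m + 1) → Fin (n + 1)) (x : X.obj n),
    app m (X.act α x) = Y.act α (app n x)

/-- A map of symmetric sets is an isomorphism iff it is levelwise bijective. -/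
def SymMap.IsIso {X Y : SymSet} (F : SymMap X Y) : Prop :=
  ∀ n : ℕ, Function.Bijective (F.app n)

/-- `X` and `Y` are isomorphic symmetric sets. -/
def Isomorphic (X Y : SymSet) : Prop := ∃ F : SymMap X Y, F.IsIso

/-- The Bousfield–Segal map `𝓑_m : X_m → X_1^m`, `x ↦ (x_{01}, x_{02}, …, x_{0m})`. -/
def bousfield (X : SymSet) {m : ℕ} (x : X.obj m) : Fin m → X.obj 1 :=
  fun i => X.edge 0 i.succ x

/-- `X` is spiny in degrees below `q`: `𝓔_T` is injective for every spine `T`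
of `[n]` for each `1 ≤ n ≤ q`. -/
def SpinyBelow (X : SymSet) (q : ℕ) : Prop :=
  ∀ n : ℕ, 1 ≤ n → n ≤ q → ∀ T : SimpleGraph (Fin (n + 1)), T.IsTree →
    Function.Injective (X.spineMap T)

/-- `X` is a groupoid: `𝓔_T : X_n → lim_T X` is a bijection for every `n ≥ 1`
and every spine `T` of `[n]`. -/
def IsGroupoid (X : SymSet) : Prop :=
  ∀ n : ℕ, 1 ≤ n → ∀ T : SimpleGraph (Fin (n + 1)), T.IsTree →
    Function.Bijective (X.spineMap T)

/-- `X` is reduced: `X_0` is a singleton. -/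
def Reduced (X : SymSet) : Prop := Nonempty (X.obj 0) ∧ Subsingleton (X.obj 0)

/-- A partial group is a reduced spiny symmetric set. -/
def IsPartialGroup (X : SymSet) : Prop := X.Reduced ∧ X.Spiny

/-- The levelwise product of two symmetric sets. -/
def prod (X Y : SymSet) : SymSet where
  obj n := X.obj n × Y.obj n
  act α p := (X.act α p.1, Y.act α p.2)
  act_id p := by cases p with | mk a b => simp only [X.act_id, Y.act_id]
  act_comp α β p := by cases p with | mk a b => simp only [X.act_comp, Y.act_comp]

end SymSet

/-!
If `x · α` is nondegenerate then `α` is injective: factor `α` through its image, and the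
surjective part must be a bijection. In particular, for nondegenerate `x ∈ X_k`, `x = x · α`
forces `α : [k] → [k]` to be a bijection.

For the first claim, spininess applied to the starry spine of `[k]` says that `x ∈ X_k` is
determined by the edges `x_{0i}`. If `x_{0a} = x_{0b}` with `a ≠ b ≠ 0`, the map `s` sending
`b` to `a` and fixing everything else satisfies `𝓑_k (x · s) = 𝓑_k x`, so `x · s = x` and `s`
would be a bijection. Hence `i ↦ x_{0i}` is injective, and `𝓑_m (x · σ) = (x_{0,σ(i)})_i`
recovers `σ`.
-/

open Function

theorem Fin.exists_surjective_comp_injective {m n : ℕ} (α : Fin (m + 1) → Fin (n + 1)) :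
    ∃ (c : ℕ) (σ : Fin (m + 1) → Fin (c + 1)) (ι : Fin (c + 1) → Fin (n + 1)),
      Surjective σ ∧ Injective ι ∧ ι ∘ σ = α := by
  have : Nonempty (Set.range α) := ⟨⟨α 0, Set.mem_range_self 0⟩⟩
  obtain ⟨c, hc⟩ := Nat.exists_eq_add_one_of_ne_zero (Fintype.card_ne_zero (α := Set.range α))
  let e := Fintype.equivFinOfCardEq hc
  refine ⟨c, e ∘ Set.rangeFactorization α, Subtype.val ∘ e.symm,
    e.surjective.comp Set.rangeFactorization_surjective,
    Subtype.val_injective.comp e.symm.injective, ?_⟩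
  funext i
  simp [Set.rangeFactorization]

namespace SymSet

variable (X : SymSet)

lemma edge_act {m k : ℕ} (σ : Fin (m + 1) → Fin (k + 1)) (i j : Fin (m + 1)) (x : X.obj k) :
    X.edge i j (X.act σ x) = X.edge (σ i) (σ j) x := by
  unfold edge
  rw [X.act_comp]
  congr 1
  funext t
  by_cases h : t = 0 <;> simp [h]

variable {X}

lemma injective_of_not_degenerate_act {m n : ℕ} {α : Fin (m + 1) → Fin (n + 1)}
    {x : X.obj n} (h : ¬ X.Degenerate (X.act α x)) : Injective α := by
  obtain ⟨c, σ, ι, hσ, hι, rfl⟩ := Fin.exists_surjective_comp_injective α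
  have hσbij : Bijective σ := by
    by_contra hσbij
    exact h ⟨c, σ, X.act ι x, hσ, hσbij, (X.act_comp σ ι x).symm⟩
  exact hι.comp hσbij.injective

lemma bijective_of_eq_act_self {k : ℕ} {x : X.obj k} {α : Fin (k + 1) → Fin (k + 1)}
    (hx : ¬ X.Degenerate x) (h : x = X.act α x) : Bijective α :=
  Finite.injective_iff_bijective.mp (injective_of_not_degenerate_act (h ▸ hx))

lemma SpinyBelow.injective_bousfield {q k : ℕ} (hX : X.SpinyBelow q) (hk : 1 ≤ k)
    (hkq : k ≤ q) : Injective (X.bousfield (m := k)) := by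
  intro x y h
  apply hX k hk hkq _ (SimpleGraph.isTree_starGraph 0)
  apply Subtype.ext
  funext i j hij hadj
  have hj : j ≠ 0 := Fin.ne_zero_of_lt hij
  obtain rfl : i = 0 := (SimpleGraph.starGraph_adj.mp hadj).2.resolve_right hj
  obtain ⟨j, rfl⟩ := Fin.exists_succ_eq.mpr hj
  exact congrFun h j

lemma SpinyBelow.injective_edge_zero {q k : ℕ} (hX : X.SpinyBelow q) (hkq : k ≤ q)
    {x : X.obj k} (hx : ¬ X.Degenerate x) : Injective fun i : Fin (k + 1) => X.edge 0 i x := by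
  obtain rfl | hk := Nat.eq_zero_or_pos k
  · exact fun a b _ => Fin.ext (by omega)
  intro a b hab
  wlog hb : b ≠ 0 generalizing a b
  · obtain rfl : b = 0 := not_not.mp hb
    by_cases ha : a = 0
    · exact ha
    · exact (this hab.symm ha).symm
  by_contra hne
  let s := update id b a
  have hs : X.act s x = x := by
    refine hX.injective_bousfield hk hkq (funext fun j => ?_)
    simp only [bousfield, edge_act, s, update_of_ne hb.symm, id]
    by_cases hj : j.succ = b
    · rw [hj, update_self]
      exact hab
    · rw [update_of_ne hj, id]
  have hsab : s a = s b := by simp [s, hne]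
  exact hne ((bijective_of_eq_act_self hx hs.symm).injective hsab)

lemma SpinyBelow.eq_of_bousfield_act_eq {q k m : ℕ} (hX : X.SpinyBelow q) (hkq : k ≤ q)
    {x : X.obj k} (hx : ¬ X.Degenerate x) {σ τ : Fin (m + 1) → Fin (k + 1)}
    (hσ : σ 0 = 0) (hτ : τ 0 = 0) (h : X.bousfield (X.act σ x) = X.bousfield (X.act τ x)) :
    σ = τ := by
  funext j
  induction j using Fin.cases with
  | zero => rw [hσ, hτ]
  | succ i =>
    apply hX.injective_edge_zero hkq hx
    simpa only [bousfield, edge_act, hσ, hτ] using congrFun h i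

end SymSet

/-- (i) if `X` is spiny in degrees below `q`, `σ, τ : [m] ↠ [k]`
with `σ(0) = 0 = τ(0)`, `k ≤ q`, `x ∈ X_k` nondegenerate and
`𝓑_m(x·σ) = 𝓑_m(x·τ)`, then `σ = τ`; (ii) if `x` is nondegenerate and `x = x·α`
for `α : [k] → [k]`, then `α` is a bijection. -/
theorem stmt18 :
    (∀ (X : SymSet) (q k m : ℕ) (σ τ : Fin (m + 1) → Fin (k + 1)) (x : X.obj k),
        X.SpinyBelow q → Function.Surjective σ → Function.Surjective τ →
        σ 0 = 0 → τ 0 = 0 → k ≤ q → ¬ X.Degenerate x →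
        X.bousfield (X.act σ x) = X.bousfield (X.act τ x) → σ = τ) ∧
    (∀ (X : SymSet) (k : ℕ) (x : X.obj k) (α : Fin (k + 1) → Fin (k + 1)),
        ¬ X.Degenerate x → x = X.act α x → Function.Bijective α) :=
  ⟨fun _ _ _ _ _ _ _ hX _ _ hσ hτ hkq hx h => hX.eq_of_bousfield_act_eq hkq hx hσ hτ h,
    fun _ _ _ _ hx h => SymSet.bijective_of_eq_act_self hx h⟩
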